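/- Let R ⊆ R' be a finite inclusion of Noetherian integral domains. Then there exists an intermediate ring R ⊆ R'' ⊆ R' such that R → R'' is (finite and) flat and R'' → R' is birational, i.e. R'' and R' have the same fraction field. -/

import Mathlib

set_option autoImplicit false
set_option maxHeartbeats 1000000
set_option synthInstance.maxHeartbeats 400000

universe u v

noncomputable section

namespace Paper

/-! ### Heights -/

/-- The height of an ideal `p`: the supremum of lengths of chains of prime ideals
strictly below `p`. -/
noncomputable def idealHeight {R : Type*} [CommRing R] (p : Ideal R) : ℕ∞ :=
  Set.chainHeight {q : Ideal R | q.IsPrime ∧ q < p} (· < ·)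

/-- The relative height `ht (p / p₀)`: the supremum of lengths of chains of prime
ideals lying between `p₀` (inclusive) and `p` (exclusive). -/
noncomputable def relHeight {R : Type*} [CommRing R] (p₀ p : Ideal R) : ℕ∞ :=
  Set.chainHeight {q : Ideal R | q.IsPrime ∧ p₀ ≤ q ∧ q < p} (· < ·)

/-! ### Semilocal rings and completions -/

/-- A ring is semilocal if it has only finitely many maximal ideals. -/
def IsSemilocal (R : Type*) [CommRing R] : Prop :=
  {I : Ideal R | I.IsMaximal}.Finite

/-- `R^∧`: the completion of a ring with respect to its Jacobson radical. -/
abbrev jComp (R : Type u) [CommRing R] : Type u :=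
  AdicCompletion ((⊥ : Ideal R).jacobson) R

/-! ### The canonical map between completions induced by a finite extension -/

section CompletionMap

variable {R : Type u} {R' : Type v} [CommRing R] [CommRing R']

theorem pow_smul_le_comap (f : R →+* R') {I : Ideal R} {I' : Ideal R'}
    (hf : I.map f ≤ I') (n : ℕ) :
    (I ^ n • ⊤ : Ideal R) ≤ Ideal.comap f (I' ^ n • ⊤ : Ideal R') := by
  refine Submodule.smul_le.2 fun r hr x _ => ?_
  have hfr : f r ∈ I' ^ n := by
    have h1 : Ideal.map f (I ^ n) ≤ I' ^ n := by
      rw [Ideal.map_pow]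
      exact Ideal.pow_right_mono hf n
    exact h1 (Ideal.mem_map_of_mem f hr)
  have hx : f (r • x) = f r • f x := by
    simp only [smul_eq_mul, map_mul]
  simp only [Ideal.mem_comap, hx]
  exact Submodule.smul_mem_smul hfr Submodule.mem_top

/-- The map induced by `f : R →+* R'` on adic completions, provided `f` maps `I`
into `I'`. -/
def adicCompletionMap (f : R →+* R') (I : Ideal R) (I' : Ideal R')
    (hf : I.map f ≤ I') : AdicCompletion I R →+* AdicCompletion I' R' where
  toFun x := ⟨fun n => Ideal.quotientMap _ f (pow_smul_le_comap f hf n) (x.1 n),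
    fun {m n} hmn => by
      have key : ∀ y : R ⧸ (I ^ n • ⊤ : Ideal R),
          AdicCompletion.transitionMap I' R' hmn
              (Ideal.quotientMap _ f (pow_smul_le_comap f hf n) y) =
            Ideal.quotientMap _ f (pow_smul_le_comap f hf m)
              (AdicCompletion.transitionMap I R hmn y) :=
        fun y => Quotient.inductionOn' y fun s => rfl
      rw [key, x.2 hmn]⟩
  map_one' := Subtype.ext <| funext fun n =>
    map_one (Ideal.quotientMap _ f (pow_smul_le_comap f hf n))
  map_mul' x y := Subtype.ext <| funext fun n =>
    map_mul (Ideal.quotientMap _ f (pow_smul_le_comap f hf n)) (x.1 n) (y.1 n)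
  map_zero' := Subtype.ext <| funext fun n =>
    map_zero (Ideal.quotientMap _ f (pow_smul_le_comap f hf n))
  map_add' x y := Subtype.ext <| funext fun n =>
    map_add (Ideal.quotientMap _ f (pow_smul_le_comap f hf n)) (x.1 n) (y.1 n)

theorem jacobson_map_le [Algebra R R'] [Module.Finite R R'] :
    ((⊥ : Ideal R).jacobson).map (algebraMap R R') ≤ (⊥ : Ideal R').jacobson := by
  rw [Ideal.map_le_iff_le_comap]
  intro x hx
  rw [Ideal.mem_comap]
  refine Submodule.mem_sInf.2 ?_
  rintro m' ⟨-, hm'⟩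
  haveI := hm'
  have hmax : (Ideal.comap (algebraMap R R') m').IsMaximal :=
    Ideal.isMaximal_comap_of_isIntegral_of_isMaximal m'
  exact Submodule.mem_sInf.1 hx _ ⟨bot_le, hmax⟩

/-- The canonical map `R^∧ →+* R'^∧` between the Jacobson-adic completions induced
by a finite ring extension `R ⊆ R'`. -/
def jCompMap (R : Type u) (R' : Type v) [CommRing R] [CommRing R'] [Algebra R R']
    [Module.Finite R R'] : jComp R →+* jComp R' :=
  adicCompletionMap (algebraMap R R') _ _ jacobson_map_le

end CompletionMap

/-! ### FONSIs -/

/-- A formal obstruction to naive `(S₂)`-ification (FONSI) for a (semilocal) ring `R`: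
a prime `P` of `R^∧` such that `ht (P ∩ R) > 1` and there is a minimal prime
`P₀ ⊆ P` of `R^∧` with `ht (P/P₀) = 1`. -/
def IsFONSI (R : Type u) [CommRing R] (P : Ideal (jComp R)) : Prop :=
  P.IsPrime ∧ 1 < idealHeight (P.comap (algebraMap R (jComp R))) ∧
    ∃ P₀ ∈ minimalPrimes (jComp R), P₀ ≤ P ∧ relHeight P₀ P = 1

/-- The set `OS R` of FONSIs of a (semilocal) ring `R`. -/
def OS (R : Type u) [CommRing R] : Set (Ideal (jComp R)) :=
  {P | IsFONSI R P}

/-- `OS R = ∅` for a general (not necessarily semilocal) ring `R`, where `OS R` is the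
disjoint union of the `OS (R_𝔪)` over all maximal ideals `𝔪` of `R`. -/
def OSIsEmpty (R : Type u) [CommRing R] : Prop :=
  ∀ (m : Ideal R) (_ : m.IsMaximal), OS (Localization.AtPrime m) = ∅

/-! ### Depth and Serre's conditions -/

/-- The depth of a module `M` over a local ring `A`: the supremum of the lengths of
regular sequences on `M` consisting of elements of the maximal ideal. -/
noncomputable def depth (A : Type*) [CommRing A] [IsLocalRing A]
    (M : Type*) [AddCommGroup M] [Module A M] : ℕ∞ :=
  sSup {n : ℕ∞ | ∃ rs : List A, (rs.length : ℕ∞) = n ∧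
    (∀ r ∈ rs, r ∈ IsLocalRing.maximalIdeal A) ∧ RingTheory.Sequence.IsRegular M rs}

/-- Serre's condition `(S_k)`: `depth A_p ≥ min (k, ht p)` for all primes `p`. -/
def SerreS (k : ℕ) (A : Type*) [CommRing A] : Prop :=
  ∀ (p : Ideal A) (_ : p.IsPrime),
    min (k : ℕ∞) (idealHeight p) ≤ depth (Localization.AtPrime p) (Localization.AtPrime p)

/-- Serre's condition `(S₂)` for a finite module `M` over a Noetherian ring `R`:
`depth M_p ≥ min (2, dim M_p)` for all primes `p` in the support of `M`. -/
def ModuleSerreS2 (R : Type u) (M : Type v) [CommRing R] [AddCommGroup M] [Module R M] :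
    Prop :=
  ∀ (p : Ideal R) (hp : p.IsPrime), (⟨p, hp⟩ : PrimeSpectrum R) ∈ Module.support R M →
    min (2 : WithBot ℕ∞)
        (ringKrullDim ((Localization.AtPrime p) ⧸
          Module.annihilator (Localization.AtPrime p) (LocalizedModule p.primeCompl M)))
      ≤ (depth (Localization.AtPrime p) (LocalizedModule p.primeCompl M) : WithBot ℕ∞)

/-! ### Localizations inside the fraction field; `nσ` and `σ` closures -/

/-- The localization of a subalgebra `A ⊆ Frac R` at a prime `p` of `R`, viewed as a
subalgebra of `Frac R`: all `x` with `t·x ∈ A` for some `t ∈ R ∖ p`. -/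
def locOfSubalgebra (R : Type u) [CommRing R] [IsDomain R]
    (A : Subalgebra R (FractionRing R)) (p : Ideal R) (hp : p.IsPrime) :
    Subalgebra R (FractionRing R) where
  carrier := {x | ∃ t : R, t ∉ p ∧ algebraMap R (FractionRing R) t * x ∈ A}
  mul_mem' := by
    rintro x y ⟨t, ht, hx⟩ ⟨s, hs, hy⟩
    refine ⟨t * s, fun h => (hp.mem_or_mem h).elim ht hs, ?_⟩
    have heq : algebraMap R (FractionRing R) (t * s) * (x * y) =
        (algebraMap R (FractionRing R) t * x) * (algebraMap R (FractionRing R) s * y) := by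
      rw [map_mul]; ring
    rw [heq]
    exact mul_mem hx hy
  one_mem' := ⟨1, fun h => hp.ne_top ((Ideal.eq_top_iff_one p).2 h), by
    simpa using Subalgebra.one_mem A⟩
  add_mem' := by
    rintro x y ⟨t, ht, hx⟩ ⟨s, hs, hy⟩
    refine ⟨t * s, fun h => (hp.mem_or_mem h).elim ht hs, ?_⟩
    have heq : algebraMap R (FractionRing R) (t * s) * (x + y) =
        algebraMap R (FractionRing R) s * (algebraMap R (FractionRing R) t * x) +
          algebraMap R (FractionRing R) t * (algebraMap R (FractionRing R) s * y) := by
      rw [map_mul]; ring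
    rw [heq]
    exact add_mem (mul_mem (Subalgebra.algebraMap_mem A s) hx)
      (mul_mem (Subalgebra.algebraMap_mem A t) hy)
  zero_mem' := ⟨1, fun h => hp.ne_top ((Ideal.eq_top_iff_one p).2 h), by
    simpa using Subalgebra.zero_mem A⟩
  algebraMap_mem' := fun r => ⟨1, fun h => hp.ne_top ((Ideal.eq_top_iff_one p).2 h), by
    simpa using Subalgebra.algebraMap_mem A r⟩

/-- The localization `R_p` of a domain `R` at a prime `p`, as a subalgebra of the
fraction field. -/
noncomputable def locSubR (R : Type u) [CommRing R] [IsDomain R] (p : Ideal R)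
    (hp : p.IsPrime) : Subalgebra R (FractionRing R) :=
  locOfSubalgebra R ⊥ p hp

/-- `R^{nσ} = ⋂ R_q`, the intersection over all height-one primes `q` of `R`, inside
the fraction field. -/
noncomputable def nsigma (R : Type u) [CommRing R] [IsDomain R] :
    Subalgebra R (FractionRing R) :=
  ⨅ q : {q : Ideal R // q.IsPrime ∧ idealHeight q = 1}, locSubR R q.1 q.2.1

/-- `R^σ = R^{nσ} ∩ R^ν`. -/
noncomputable def sigma (R : Type u) [CommRing R] [IsDomain R] :
    Subalgebra R (FractionRing R) :=
  nsigma R ⊓ integralClosure R (FractionRing R)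

/-- The localization `S_q` of a subalgebra `S ⊆ Frac R` at a prime `q` of `S`, as a
subalgebra of `Frac R`. -/
def locSub (R : Type u) [CommRing R] [IsDomain R] (S : Subalgebra R (FractionRing R))
    (q : Ideal S) (hq : q.IsPrime) : Subalgebra R (FractionRing R) where
  carrier := {x | ∃ t : S, t ∉ q ∧ (t : FractionRing R) * x ∈ S}
  mul_mem' := by
    rintro x y ⟨t, ht, hx⟩ ⟨s, hs, hy⟩
    refine ⟨t * s, fun h => (hq.mem_or_mem h).elim ht hs, ?_⟩
    have heq : ((t * s : S) : FractionRing R) * (x * y) =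
        ((t : FractionRing R) * x) * ((s : FractionRing R) * y) := by
      push_cast; ring
    rw [heq]
    exact mul_mem hx hy
  one_mem' := ⟨1, fun h => hq.ne_top ((Ideal.eq_top_iff_one q).2 h), by
    simpa using Subalgebra.one_mem S⟩
  add_mem' := by
    rintro x y ⟨t, ht, hx⟩ ⟨s, hs, hy⟩
    refine ⟨t * s, fun h => (hq.mem_or_mem h).elim ht hs, ?_⟩
    have heq : ((t * s : S) : FractionRing R) * (x + y) =
        (s : FractionRing R) * ((t : FractionRing R) * x) +
          (t : FractionRing R) * ((s : FractionRing R) * y) := by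
      push_cast; ring
    rw [heq]
    exact add_mem (mul_mem s.2 hx) (mul_mem t.2 hy)
  zero_mem' := ⟨1, fun h => hq.ne_top ((Ideal.eq_top_iff_one q).2 h), by
    simpa using Subalgebra.zero_mem S⟩
  algebraMap_mem' := fun r => ⟨1, fun h => hq.ne_top ((Ideal.eq_top_iff_one q).2 h), by
    simpa using Subalgebra.algebraMap_mem S r⟩

/-- `S^{nσ}` for a subalgebra `S` of the fraction field of `R`: the intersection of
the `S_q` over all height-one primes `q` of `S`. -/
noncomputable def nsigmaIn (R : Type u) [CommRing R] [IsDomain R]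
    (S : Subalgebra R (FractionRing R)) : Subalgebra R (FractionRing R) :=
  ⨅ q : {q : Ideal S // q.IsPrime ∧ idealHeight q = 1}, locSub R S q.1 q.2.1

/-- `S^σ = S^{nσ} ∩ S^ν` for a subalgebra `S` of the fraction field of `R`. -/
noncomputable def sigmaIn (R : Type u) [CommRing R] [IsDomain R]
    (S : Subalgebra R (FractionRing R)) : Subalgebra R (FractionRing R) :=
  nsigmaIn R S ⊓ (integralClosure S (FractionRing R)).restrictScalars R

/-- The canonical embedding of fraction fields induced by an injective map of
domains. -/
noncomputable def fracMap (R R' : Type*) [CommRing R] [CommRing R'] [IsDomain R]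
    [IsDomain R'] [Algebra R R'] (hinj : Function.Injective (algebraMap R R')) :
    FractionRing R →+* FractionRing R' :=
  IsFractionRing.lift (g := (algebraMap R' (FractionRing R')).comp (algebraMap R R'))
    ((IsFractionRing.injective R' (FractionRing R')).comp hinj)

/-! ### The ad hoc `(S₂)` condition -/

/-- The `(S₂)` condition of the paper for subalgebras of the normalization: every
nonzero principal ideal is a finite intersection of primary ideals whose radicals
are height-one primes. -/
def AdHocS2 (S : Type*) [CommRing S] : Prop :=
  ∀ a : S, a ≠ 0 → ∃ T : Finset (Ideal S),
    (∀ Q ∈ T, Q.IsPrimary ∧ idealHeight Q.radical = 1) ∧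
    Ideal.span {a} = T.inf id

/-! ### Nagata and semi-Nagata rings -/

/-- A Nagata ring: a Noetherian ring such that every finite algebra over it that is a
domain has finite normalization. -/
def IsNagataRing (R : Type u) [CommRing R] : Prop :=
  IsNoetherianRing R ∧
    ∀ (B : Type u) [CommRing B] [IsDomain B] [Algebra R B], Module.Finite R B →
      Module.Finite B (integralClosure B (FractionRing B))

/-- A semi-Nagata ring: a Noetherian ring such that every finite algebra over it that
is a domain admits a finite inclusion into an `(S₂)` domain. -/
def IsSemiNagata (R : Type u) [CommRing R] : Prop :=
  IsNoetherianRing R ∧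
    ∀ (B : Type u) [CommRing B] [IsDomain B] [Algebra R B], Module.Finite R B →
      ∃ (C : Type u) (_ : CommRing C) (_ : IsDomain C) (_ : Algebra B C),
        Function.Injective (algebraMap B C) ∧ Module.Finite B C ∧ SerreS 2 C


/-! ### Cohen–Macaulay, Gorenstein, regular, lci local rings -/

/-- A Cohen–Macaulay local ring: a Noetherian local ring whose depth equals its Krull
dimension. -/
def IsCMLocalRing (A : Type u) [CommRing A] [IsLocalRing A] : Prop :=
  IsNoetherianRing A ∧ (depth A A : WithBot ℕ∞) = ringKrullDim A

/-- A Cohen–Macaulay ring: all localizations at primes are Cohen–Macaulay local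
rings. -/
def IsCohenMacaulayRing (A : Type u) [CommRing A] : Prop :=
  ∀ (p : Ideal A) (_ : p.IsPrime), IsCMLocalRing (Localization.AtPrime p)

/-- A Gorenstein local ring: a Noetherian local ring admitting a regular sequence
`rs` in the maximal ideal such that the quotient is Artinian with one-dimensional
(i.e. nonzero principal) socle. -/
def IsGorensteinLocalRing (A : Type u) [CommRing A] [IsLocalRing A] : Prop :=
  IsNoetherianRing A ∧
    ∃ rs : List A, (∀ r ∈ rs, r ∈ IsLocalRing.maximalIdeal A) ∧
      RingTheory.Sequence.IsRegular A rs ∧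
      IsArtinianRing (A ⧸ Ideal.span {r | r ∈ rs}) ∧
      ∃ x : A, x ∉ Ideal.span {r | r ∈ rs} ∧
        Submodule.colon (Ideal.span {r | r ∈ rs}) (IsLocalRing.maximalIdeal A) =
          Ideal.span {r | r ∈ rs} ⊔ Ideal.span {x}

/-- A regular local ring: a Noetherian local ring whose maximal ideal is generated by
`dim A` elements. -/
def IsRegularLocal (A : Type u) [CommRing A] [IsLocalRing A] : Prop :=
  IsNoetherianRing A ∧ ∃ s : Finset A,
    Ideal.span (s : Set A) = IsLocalRing.maximalIdeal A ∧
    (s.card : WithBot ℕ∞) = ringKrullDim A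

/-- A local complete intersection (lci) local ring: a Noetherian local ring whose
completion is the quotient of a regular local ring by an ideal generated by a regular
sequence. -/
def IsLciLocalRing (A : Type u) [CommRing A] [IsLocalRing A] : Prop :=
  IsNoetherianRing A ∧
    ∃ (B : Type u) (_ : CommRing B) (_ : IsLocalRing B), IsRegularLocal B ∧
      ∃ φ : B →+* jComp A, Function.Surjective φ ∧
        ∃ rs : List B, RingTheory.Sequence.IsRegular B rs ∧
          RingHom.ker φ = Ideal.span {r | r ∈ rs}

/-! ### Formal fibers -/

/-- The fiber ring of `A → B` over a prime `q` of `A`: the localization of `B ⧸ qB` at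
the image of `A ∖ q`; it is isomorphic to `B ⊗_A κ(q)`. -/
abbrev FiberRing (A : Type u) (B : Type u) [CommRing A] [CommRing B] [Algebra A B]
    (q : Ideal A) [q.IsPrime] : Type u :=
  Localization (Submonoid.map (algebraMap A (B ⧸ Ideal.map (algebraMap A B) q))
    q.primeCompl)

/-- `R` has `(S₁)` formal fibers: for every prime `p` of `R`, all fibers of the
completion map `R_p → (R_p)^∧` satisfy `(S₁)`. -/
def HasS1FormalFibers (R : Type u) [CommRing R] : Prop :=
  ∀ (p : Ideal R) (_ : p.IsPrime)
    (q : Ideal (Localization.AtPrime p)) (_ : q.IsPrime),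
    SerreS 1 (FiberRing (Localization.AtPrime p) (jComp (Localization.AtPrime p)) q)

/-- All fibers of `A → B` are geometrically `P`: for every prime `q` of `A` and every
finite field extension `L` of the residue field `κ(q)`, every local ring of `B ⊗_A L`
at one of its primes satisfies `P`. -/
def GeomFibersP (P : (A : Type u) → [CommRing A] → [IsLocalRing A] → Prop)
    (A : Type u) (B : Type u) [CommRing A] [CommRing B] [Algebra A B] : Prop :=
  ∀ (q : Ideal A) (_ : q.IsPrime) (L : Type u) (_ : Field L) (_ : Algebra A L),
    RingHom.ker (algebraMap A L) = q →
    FiniteDimensional (Subfield.closure (Set.range (algebraMap A L))) L →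
    ∀ (M : Ideal (TensorProduct A B L)) (_ : M.IsPrime), P (Localization.AtPrime M)

/-- `R` is a `P`-ring: all formal fibers of `R` are geometrically `P`. -/
def IsPRing (P : (A : Type u) → [CommRing A] → [IsLocalRing A] → Prop)
    (R : Type u) [CommRing R] : Prop :=
  ∀ (p : Ideal R) (_ : p.IsPrime),
    GeomFibersP P (Localization.AtPrime p) (jComp (Localization.AtPrime p))

/-! ### Catenary rings -/

/-- A catenary ring: any two prime ideals `p ≤ q` are connected by saturated chains
of primes only of length `ht (q/p)`. -/
def IsCatenaryRing (A : Type u) [CommRing A] : Prop :=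
  ∀ (n : ℕ) (c : Fin (n + 1) → Ideal A), (∀ i, (c i).IsPrime) →
    (∀ i : Fin n, c i.castSucc < c i.succ) →
    (∀ i : Fin n, ∀ r : Ideal A, r.IsPrime → ¬(c i.castSucc < r ∧ r < c i.succ)) →
    (n : ℕ∞) = relHeight (c 0) (c (Fin.last n))

/-! ### Localizations of submodules inside a localized ambient module -/

/-- For a submodule `M₀` of an `R`-module `X`, the "localization at a prime `p` inside
`X`": all `x ∈ X` with `t • x ∈ M₀` for some `t ∉ p`. -/
def locSubmodule {R : Type u} [CommRing R] {X : Type v} [AddCommGroup X] [Module R X]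
    (M₀ : Submodule R X) (p : Ideal R) (hp : p.IsPrime) : Submodule R X where
  carrier := {x | ∃ t : R, t ∉ p ∧ t • x ∈ M₀}
  add_mem' := by
    rintro x y ⟨t, ht, hx⟩ ⟨s, hs, hy⟩
    refine ⟨t * s, fun h => (hp.mem_or_mem h).elim ht hs, ?_⟩
    have heq : (t * s) • (x + y) = s • (t • x) + t • (s • y) := by
      rw [smul_add]
      rw [← mul_smul, ← mul_smul, mul_comm s t]
    rw [heq]
    exact M₀.add_mem (M₀.smul_mem s hx) (M₀.smul_mem t hy)
  zero_mem' := ⟨1, fun h => hp.ne_top ((Ideal.eq_top_iff_one p).2 h), by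
    simp⟩
  smul_mem' := by
    rintro r x ⟨t, ht, hx⟩
    refine ⟨t, ht, ?_⟩
    have heq : t • (r • x) = r • (t • x) := smul_comm t r x
    rw [heq]
    exact M₀.smul_mem r hx

end Paper

/-!
Pick `t ⊆ R'` whose image in `R' ⧸ R ∙ 1` is a maximal linearly independent set. Then `{1} ∪ t`
is linearly independent and spans `R'` up to torsion, and `t` is finite because `R` is
Noetherian. A common denominator `b ≠ 0` puts every `b * x * y` (`x, y ∈ t`) into the span of
`{1} ∪ t`, so the free module with basis `{1} ∪ b • t` is closed under multiplication; it is the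
required `R''`, and every element of `R'` has a nonzero multiple in it.
-/

section Denominators

open Set

variable {R M : Type*} [CommRing R] [IsDomain R] [AddCommGroup M] [Module R M]

theorem exists_ne_zero_smul_mem_of_finite {s : Set M} (hs : s.Finite) {N : Submodule R M}
    (h : ∀ x ∈ s, ∃ a : R, a ≠ 0 ∧ a • x ∈ N) : ∃ a : R, a ≠ 0 ∧ ∀ x ∈ s, a • x ∈ N := by
  induction s, hs using Set.Finite.induction_on with
  | empty => exact ⟨1, one_ne_zero, by simp⟩
  | @insert x s _ _ ih =>
    obtain ⟨a, ha, hax⟩ := h x (mem_insert x s)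
    obtain ⟨c, hc, hcs⟩ := ih fun y hy => h y (mem_insert_of_mem x hy)
    refine ⟨c * a, mul_ne_zero hc ha, forall_mem_insert.2 ⟨?_, fun y hy => ?_⟩⟩
    · rw [mul_smul]; exact N.smul_mem c hax
    · rw [mul_comm, mul_smul]; exact N.smul_mem a (hcs y hy)

theorem LinearIndependent.const_smul_of_ne_zero {ι : Type*} {v : ι → M}
    (hv : LinearIndependent R v) {b : R} (hb : b ≠ 0) :
    LinearIndependent R (fun i => b • v i) := by
  rw [linearIndependent_iff'] at hv ⊢
  intro s g hg i hi
  refine (mul_eq_zero.1 (hv s (fun j => g j * b) ?_ i hi)).resolve_right hb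
  simpa only [mul_smul] using hg

end Denominators

section FlatBirational

open Submodule Set

variable {R A : Type*} [CommRing R] [CommRing A] [Algebra R A]

theorem exists_finite_linearIndepOn_mod_one [Nontrivial R] [IsNoetherianRing R]
    [Module.Finite R A] :
    ∃ t : Set A, t.Finite ∧ LinearIndepOn R (R ∙ (1 : A)).mkQ t ∧
      ∀ x : A, ∃ a : R, a ≠ 0 ∧ a • x ∈ span R (insert 1 t) := by
  obtain ⟨t, ht, hmax⟩ := exists_maximal_linearIndepOn R (R ∙ (1 : A)).mkQ
  refine ⟨t, Set.finite_coe_iff.1 ht.finite_of_isNoetherian, ht, fun x => ?_⟩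
  have hspan : ∀ y, (R ∙ (1 : A)).mkQ y ∈ span R ((R ∙ (1 : A)).mkQ '' t) →
      y ∈ span R (insert 1 t) := by
    intro y hy
    rw [← map_span, ← mem_comap, comap_map_mkQ, ← span_union, ← insert_eq] at hy
    exact hy
  by_cases hx : x ∈ t
  · exact ⟨1, one_ne_zero, by rw [one_smul]; exact subset_span (mem_insert_of_mem 1 hx)⟩
  · obtain ⟨a, ha, hax⟩ := hmax x hx
    exact ⟨a, ha, hspan _ (by rwa [map_smul])⟩

def oneSmulFamily (b : R) (t : Set A) : Unit ⊕ t → A :=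
  Sum.elim (fun _ => 1) (fun x => b • (x : A))

@[simp]
theorem oneSmulFamily_inl (b : R) (t : Set A) (u : Unit) : oneSmulFamily b t (.inl u) = 1 := rfl

@[simp]
theorem oneSmulFamily_inr (b : R) (t : Set A) (x : t) :
    oneSmulFamily b t (.inr x) = b • (x : A) := rfl

theorem linearIndependent_oneSmulFamily [IsDomain R] [FaithfulSMul R A] {b : R} (hb : b ≠ 0)
    {t : Set A} (ht : LinearIndepOn R (R ∙ (1 : A)).mkQ t) :
    LinearIndependent R (oneSmulFamily b t) := by
  have hone : LinearIndependent R
      (fun _ : Unit => (⟨1, mem_span_singleton_self 1⟩ : R ∙ (1 : A))) :=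
    .of_subsingleton' () fun r hr => by
      have : r • (1 : A) = 0 := congrArg Subtype.val hr
      rwa [← Algebra.algebraMap_eq_smul_one, FaithfulSMul.algebraMap_eq_zero_iff] at this
  exact hone.sumElim_of_quotient _ (ht.const_smul_of_ne_zero hb)

theorem smul_mem_span_range_oneSmulFamily (b : R) (t : Set A) {x : A}
    (hx : x ∈ span R (insert 1 t)) : b • x ∈ span R (range (oneSmulFamily b t)) := by
  suffices span R (insert 1 t) ≤
      (span R (range (oneSmulFamily b t))).comap (DistribSMul.toLinearMap R A b) from this hx
  rw [span_le]
  rintro _ (rfl | hy)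
  · exact smul_mem _ b (subset_span (mem_range_self (Sum.inl ())))
  · exact subset_span (mem_range_self (Sum.inr (⟨_, hy⟩ : t)))

theorem oneSmulFamily_mul_mem_span {b : R} {t : Set A}
    (hmul : ∀ x ∈ t, ∀ y ∈ t, b • (x * y) ∈ span R (insert 1 t)) (i j : Unit ⊕ t) :
    oneSmulFamily b t i * oneSmulFamily b t j ∈ span R (range (oneSmulFamily b t)) := by
  rcases i with ⟨⟩ | ⟨x, hx⟩
  · rw [oneSmulFamily_inl, one_mul]
    exact subset_span (mem_range_self j)
  rcases j with ⟨⟩ | ⟨y, hy⟩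
  · rw [oneSmulFamily_inl, mul_one]
    exact subset_span (mem_range_self _)
  · rw [oneSmulFamily_inr, oneSmulFamily_inr, smul_mul_smul_comm, mul_smul]
    exact smul_mem_span_range_oneSmulFamily b t (hmul x hx y hy)

theorem span_range_oneSmulFamily_mul_le {b : R} {t : Set A}
    (hmul : ∀ x ∈ t, ∀ y ∈ t, b • (x * y) ∈ span R (insert 1 t)) :
    span R (range (oneSmulFamily b t)) * span R (range (oneSmulFamily b t)) ≤
      span R (range (oneSmulFamily b t)) := by
  rw [span_mul_span, span_le, Set.mul_subset_iff]
  rintro _ ⟨i, rfl⟩ _ ⟨j, rfl⟩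
  exact oneSmulFamily_mul_mem_span hmul i j

def oneSmulSubalgebra (b : R) (t : Set A)
    (hmul : ∀ x ∈ t, ∀ y ∈ t, b • (x * y) ∈ span R (insert 1 t)) : Subalgebra R A :=
  (span R (range (oneSmulFamily b t))).toSubalgebra (subset_span ⟨.inl (), rfl⟩)
    fun _ _ hx hy => span_range_oneSmulFamily_mul_le hmul (mul_mem_mul hx hy)

theorem exists_finite_free_subalgebra_smul_mem [IsDomain R] [IsNoetherianRing R]
    [Module.Finite R A] [FaithfulSMul R A] :
    ∃ B : Subalgebra R A, Module.Finite R B ∧ Module.Free R B ∧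
      ∀ x : A, ∃ a : R, a ≠ 0 ∧ a • x ∈ B := by
  obtain ⟨t, htfin, htind, hspan⟩ := exists_finite_linearIndepOn_mod_one (R := R) (A := A)
  choose! c hc hcmem using hspan
  obtain ⟨b, hb, hmul⟩ := exists_ne_zero_smul_mem_of_finite (htfin.image2 (· * ·) htfin)
    fun _ _ => ⟨c _, hc _, hcmem _⟩
  have hmul' : ∀ x ∈ t, ∀ y ∈ t, b • (x * y) ∈ span R (insert 1 t) :=
    fun x hx y hy => hmul _ (mem_image2_of_mem hx hy)
  have := htfin.to_subtype
  refine ⟨oneSmulSubalgebra b t hmul', ?_, ?_, fun x => ⟨b * c x, mul_ne_zero hb (hc x), ?_⟩⟩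
  · exact Module.Finite.span_of_finite R (finite_range _)
  · exact Module.Free.of_basis (Module.Basis.span (linearIndependent_oneSmulFamily hb htind))
  · rw [mul_smul]
    exact smul_mem_span_range_oneSmulFamily b t (hcmem x)

end FlatBirational

open Paper in
theorem exists_flat_birational_factorization_general
    (R R' : Type u) [CommRing R] [CommRing R'] [IsDomain R]
    [IsNoetherianRing R] [Algebra R R']
    (hinj : Function.Injective (algebraMap R R')) [Module.Finite R R'] :
    ∃ R'' : Subalgebra R R', Module.Finite R R'' ∧ Module.Flat R R'' ∧
      ∀ x : R', ∃ y s : R'', s ≠ 0 ∧ (s : R') * x = (y : R') := by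
  have := (faithfulSMul_iff_algebraMap_injective R R').2 hinj
  obtain ⟨R'', hfin, hfree, hden⟩ := exists_finite_free_subalgebra_smul_mem (R := R) (A := R')
  refine ⟨R'', hfin, inferInstance, fun x => ?_⟩
  obtain ⟨a, ha, hax⟩ := hden x
  refine ⟨⟨a • x, hax⟩, algebraMap R R'' a, fun h => ha ?_, (Algebra.smul_def a x).symm⟩
  exact (FaithfulSMul.algebraMap_eq_zero_iff R R').1 (congrArg Subtype.val h)

open Paper in
/-- A finite inclusion of Noetherian domains `R ⊆ R'` factors as
`R ⊆ R'' ⊆ R'` with `R → R''` finite and flat and `R'' → R'` birational. -/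
theorem exists_flat_birational_factorization
    (R R' : Type u) [CommRing R] [CommRing R'] [IsDomain R] [IsDomain R']
    [IsNoetherianRing R] [IsNoetherianRing R'] [Algebra R R']
    (hinj : Function.Injective (algebraMap R R')) [Module.Finite R R'] :
    ∃ R'' : Subalgebra R R', Module.Finite R R'' ∧ Module.Flat R R'' ∧
      ∀ x : R', ∃ y s : R'', s ≠ 0 ∧ (s : R') * x = (y : R') :=
  exists_flat_birational_factorization_general R R' hinj
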